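/- Suppose a function g : [−1,0] × [−1,1] → ℝ is continuous and for each dyadic R = 2^{−N} (N ≥ 1) and all pairs of points (t,x),(s,y) in the grid Γ_R = ([−1,0]×[−1,1]) ∩ (R²ℤ × Rℤ) with |t−s| ≤ 3R² and |x−y| ≤ R, one has |g(t,x) − g(s,y)| ≤ Λ R^α for some Λ ≥ 0 and α ∈ (0,1). Then for all (t,x),(s,y) ∈ [−1,0]×[−1,1], |g(t,x) − g(s,y)| ≤ C(α) Λ (√|t−s| + |x−y|)^α. -/
import Mathlib


open Set

/-- The parabolic grid of scale `R` inside `[−1,0]×[−1,1]`: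
`Γ_R = ([−1,0]×[−1,1]) ∩ (R²ℤ × Rℤ)`. -/
def grid (R : ℝ) : Set (ℝ × ℝ) :=
  {p | p.1 ∈ Icc (-1:ℝ) 0 ∧ p.2 ∈ Icc (-1:ℝ) 1 ∧
       (∃ m : ℤ, p.1 = m * R^2) ∧ (∃ n : ℤ, p.2 = n * R)}

namespace Stmt17Aux

/-- The single-scale increment hypothesis. -/
def Hyp (g : ℝ × ℝ → ℝ) (Λ α R : ℝ) : Prop :=
  ∀ p ∈ grid R, ∀ q ∈ grid R, |p.1 - q.1| ≤ 3 * R^2 → |p.2 - q.2| ≤ R →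
    |g p - g q| ≤ Λ * R ^ α

noncomputable def projT (R t : ℝ) : ℝ := ⌈t / R^2⌉ * R^2
noncomputable def projX (R x : ℝ) : ℝ := ⌊x / R⌋ * R
noncomputable def proj (R : ℝ) (p : ℝ × ℝ) : ℝ × ℝ := (projT R p.1, projX R p.2)

variable {g : ℝ × ℝ → ℝ} {Λ α R : ℝ}

lemma walkT_le (hΛ : 0 ≤ Λ) (hR : 0 < R) (hH : Hyp g Λ α R) :
    ∀ kt : ℕ, ∀ m m' n : ℤ, m ≤ m' →
      ((m:ℝ) * R^2 ∈ Icc (-1:ℝ) 0) → ((m':ℝ) * R^2 ∈ Icc (-1:ℝ) 0) →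
      ((n:ℝ) * R ∈ Icc (-1:ℝ) 1) → m' - m ≤ (kt:ℤ) →
      |g ((m:ℝ) * R^2, (n:ℝ) * R) - g ((m':ℝ) * R^2, (n:ℝ) * R)| ≤ kt * (Λ * R ^ α) := by
  have hRα : 0 ≤ R ^ α := (Real.rpow_pos_of_pos hR α).le
  intro kt
  induction kt with
  | zero =>
    intro m m' n hle h1 h2 h3 hk
    have : m = m' := le_antisymm hle (by omega)
    subst this; simp
  | succ k ih =>
    intro m m' n hle h1 h2 h3 hk
    rcases eq_or_lt_of_le hle with heq | hlt
    · subst heq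
      simp only [sub_self, abs_zero]
      positivity
    · have hcast : ((m:ℝ) + 1) ≤ (m':ℝ) := by exact_mod_cast hlt
      have hm1 : ((m:ℝ)+1) * R^2 ∈ Icc (-1:ℝ) 0 := by
        constructor
        · have : (m:ℝ) * R^2 ≤ ((m:ℝ)+1) * R^2 :=
            mul_le_mul_of_nonneg_right (by linarith) (sq_nonneg R)
          linarith [h1.1]
        · have : ((m:ℝ)+1) * R^2 ≤ (m':ℝ) * R^2 :=
            mul_le_mul_of_nonneg_right hcast (sq_nonneg R)
          linarith [h2.2]
      have gm : ((m:ℝ) * R^2, (n:ℝ) * R) ∈ grid R := ⟨h1, h3, ⟨m, rfl⟩, ⟨n, rfl⟩⟩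
      have gm1 : (((m:ℝ)+1) * R^2, (n:ℝ) * R) ∈ grid R :=
        ⟨hm1, h3, ⟨m+1, by push_cast; ring⟩, ⟨n, rfl⟩⟩
      have step : |g ((m:ℝ) * R^2, (n:ℝ) * R) - g (((m:ℝ)+1) * R^2, (n:ℝ) * R)| ≤ Λ * R ^ α := by
        refine hH _ gm _ gm1 ?_ ?_
        · simp only
          rw [show (m:ℝ)*R^2 - ((m:ℝ)+1)*R^2 = -(R^2) by ring, abs_neg,
            abs_of_nonneg (sq_nonneg R)]
          nlinarith [sq_nonneg R]
        · simp [hR.le]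
      have ih' : |g (((m:ℝ)+1) * R^2, (n:ℝ) * R) - g ((m':ℝ) * R^2, (n:ℝ) * R)| ≤
          k * (Λ * R ^ α) := by
        have := ih (m+1) m' n (by omega) (by push_cast; exact hm1) h2 h3 (by omega)
        push_cast at this
        exact this
      calc |g ((m:ℝ) * R^2, (n:ℝ) * R) - g ((m':ℝ) * R^2, (n:ℝ) * R)|
          ≤ |g ((m:ℝ) * R^2, (n:ℝ) * R) - g (((m:ℝ)+1) * R^2, (n:ℝ) * R)| +
            |g (((m:ℝ)+1) * R^2, (n:ℝ) * R) - g ((m':ℝ) * R^2, (n:ℝ) * R)| := abs_sub_le _ _ _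
        _ ≤ Λ * R ^ α + k * (Λ * R ^ α) := add_le_add step ih'
        _ = (k+1 : ℕ) * (Λ * R ^ α) := by push_cast; ring

lemma walkT (hΛ : 0 ≤ Λ) (hR : 0 < R) (hH : Hyp g Λ α R) (kt : ℕ) (m m' n : ℤ)
    (h1 : (m:ℝ) * R^2 ∈ Icc (-1:ℝ) 0) (h2 : (m':ℝ) * R^2 ∈ Icc (-1:ℝ) 0)
    (h3 : (n:ℝ) * R ∈ Icc (-1:ℝ) 1) (hk : |m - m'| ≤ (kt:ℤ)) :
    |g ((m:ℝ) * R^2, (n:ℝ) * R) - g ((m':ℝ) * R^2, (n:ℝ) * R)| ≤ kt * (Λ * R ^ α) := by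
  rcases le_total m m' with h | h
  · exact walkT_le hΛ hR hH kt m m' n h h1 h2 h3 (by rw [abs_of_nonpos (by omega)] at hk; omega)
  · rw [abs_sub_comm]
    exact walkT_le hΛ hR hH kt m' m n h h2 h1 h3 (by rw [abs_of_nonneg (by omega)] at hk; omega)

lemma walkX_le (hΛ : 0 ≤ Λ) (hR : 0 < R) (hH : Hyp g Λ α R) :
    ∀ kx : ℕ, ∀ m n n' : ℤ, n ≤ n' →
      ((m:ℝ) * R^2 ∈ Icc (-1:ℝ) 0) → ((n:ℝ) * R ∈ Icc (-1:ℝ) 1) →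
      ((n':ℝ) * R ∈ Icc (-1:ℝ) 1) → n' - n ≤ (kx:ℤ) →
      |g ((m:ℝ) * R^2, (n:ℝ) * R) - g ((m:ℝ) * R^2, (n':ℝ) * R)| ≤ kx * (Λ * R ^ α) := by
  have hRα : 0 ≤ R ^ α := (Real.rpow_pos_of_pos hR α).le
  intro kx
  induction kx with
  | zero =>
    intro m n n' hle h1 h2 h3 hk
    have : n = n' := le_antisymm hle (by omega)
    subst this; simp
  | succ k ih =>
    intro m n n' hle h1 h2 h3 hk
    rcases eq_or_lt_of_le hle with heq | hlt
    · subst heq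
      simp only [sub_self, abs_zero]
      positivity
    · have hcast : ((n:ℝ) + 1) ≤ (n':ℝ) := by exact_mod_cast hlt
      have hn1 : ((n:ℝ)+1) * R ∈ Icc (-1:ℝ) 1 := by
        constructor
        · have : (n:ℝ) * R ≤ ((n:ℝ)+1) * R :=
            mul_le_mul_of_nonneg_right (by linarith) hR.le
          linarith [h2.1]
        · have : ((n:ℝ)+1) * R ≤ (n':ℝ) * R :=
            mul_le_mul_of_nonneg_right hcast hR.le
          linarith [h3.2]
      have gm : ((m:ℝ) * R^2, (n:ℝ) * R) ∈ grid R := ⟨h1, h2, ⟨m, rfl⟩, ⟨n, rfl⟩⟩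
      have gm1 : ((m:ℝ) * R^2, ((n:ℝ)+1) * R) ∈ grid R :=
        ⟨h1, hn1, ⟨m, rfl⟩, ⟨n+1, by push_cast; ring⟩⟩
      have step : |g ((m:ℝ) * R^2, (n:ℝ) * R) - g ((m:ℝ) * R^2, ((n:ℝ)+1) * R)| ≤ Λ * R ^ α := by
        refine hH _ gm _ gm1 ?_ ?_
        · simp only [sub_self, abs_zero]
          nlinarith [sq_nonneg R]
        · simp only
          rw [show (n:ℝ)*R - ((n:ℝ)+1)*R = -R by ring, abs_neg, abs_of_nonneg hR.le]
      have ih' : |g ((m:ℝ) * R^2, ((n:ℝ)+1) * R) - g ((m:ℝ) * R^2, (n':ℝ) * R)| ≤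
          k * (Λ * R ^ α) := by
        have := ih m (n+1) n' (by omega) h1 (by push_cast; exact hn1) h3 (by omega)
        push_cast at this
        exact this
      calc |g ((m:ℝ) * R^2, (n:ℝ) * R) - g ((m:ℝ) * R^2, (n':ℝ) * R)|
          ≤ |g ((m:ℝ) * R^2, (n:ℝ) * R) - g ((m:ℝ) * R^2, ((n:ℝ)+1) * R)| +
            |g ((m:ℝ) * R^2, ((n:ℝ)+1) * R) - g ((m:ℝ) * R^2, (n':ℝ) * R)| := abs_sub_le _ _ _
        _ ≤ Λ * R ^ α + k * (Λ * R ^ α) := add_le_add step ih'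
        _ = (k+1 : ℕ) * (Λ * R ^ α) := by push_cast; ring

lemma walkX (hΛ : 0 ≤ Λ) (hR : 0 < R) (hH : Hyp g Λ α R) (kx : ℕ) (m n n' : ℤ)
    (h1 : (m:ℝ) * R^2 ∈ Icc (-1:ℝ) 0) (h2 : (n:ℝ) * R ∈ Icc (-1:ℝ) 1)
    (h3 : (n':ℝ) * R ∈ Icc (-1:ℝ) 1) (hk : |n - n'| ≤ (kx:ℤ)) :
    |g ((m:ℝ) * R^2, (n:ℝ) * R) - g ((m:ℝ) * R^2, (n':ℝ) * R)| ≤ kx * (Λ * R ^ α) := by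
  rcases le_total n n' with h | h
  · exact walkX_le hΛ hR hH kx m n n' h h1 h2 h3 (by rw [abs_of_nonpos (by omega)] at hk; omega)
  · rw [abs_sub_comm]
    exact walkX_le hΛ hR hH kx m n' n h h1 h3 h2 (by rw [abs_of_nonneg (by omega)] at hk; omega)

/-- Walk between any two grid points, through a corner point. -/
lemma walk (hΛ : 0 ≤ Λ) (hR : 0 < R) (hH : Hyp g Λ α R) (kt kx : ℕ)
    {a b : ℝ × ℝ} (ha : a ∈ grid R) (hb : b ∈ grid R)
    (h1 : |a.1 - b.1| ≤ kt * R^2) (h2 : |a.2 - b.2| ≤ kx * R) :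
    |g a - g b| ≤ (kt + kx : ℕ) * (Λ * R ^ α) := by
  obtain ⟨a1, a2⟩ := a
  obtain ⟨b1, b2⟩ := b
  obtain ⟨ha1, ha2, ⟨m, hm⟩, ⟨n, hn⟩⟩ := ha
  obtain ⟨hb1, hb2, ⟨m', hm'⟩, ⟨n', hn'⟩⟩ := hb
  simp only at ha1 ha2 hb1 hb2 hm hn hm' hn' h1 h2
  subst hm hn hm' hn'
  have hR2 : (0:ℝ) < R^2 := by positivity
  have hmt : |m - m'| ≤ (kt:ℤ) := by
    have key : |(m:ℝ) - m'| * R^2 ≤ kt * R^2 := by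
      rw [← abs_of_nonneg hR2.le, ← abs_mul, abs_of_nonneg hR2.le]
      calc |((m:ℝ) - m') * R^2| = |(m:ℝ) * R^2 - (m':ℝ) * R^2| := by ring_nf
        _ ≤ kt * R^2 := h1
    have : |(m:ℝ) - m'| ≤ (kt:ℝ) := le_of_mul_le_mul_right key hR2
    exact_mod_cast this
  have hnx : |n - n'| ≤ (kx:ℤ) := by
    have key : |(n:ℝ) - n'| * R ≤ kx * R := by
      rw [← abs_of_nonneg hR.le, ← abs_mul, abs_of_nonneg hR.le]
      calc |((n:ℝ) - n') * R| = |(n:ℝ) * R - (n':ℝ) * R| := by ring_nf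
        _ ≤ kx * R := h2
    have : |(n:ℝ) - n'| ≤ (kx:ℝ) := le_of_mul_le_mul_right key hR
    exact_mod_cast this
  have W1 := walkX hΛ hR hH kx m n n' ha1 ha2 hb2 hnx
  have W2 := walkT hΛ hR hH kt m m' n' ha1 hb1 hb2 hmt
  calc |g ((m:ℝ) * R^2, (n:ℝ) * R) - g ((m':ℝ) * R^2, (n':ℝ) * R)|
      ≤ |g ((m:ℝ) * R^2, (n:ℝ) * R) - g ((m:ℝ) * R^2, (n':ℝ) * R)| +
        |g ((m:ℝ) * R^2, (n':ℝ) * R) - g ((m':ℝ) * R^2, (n':ℝ) * R)| := abs_sub_le _ _ _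
    _ ≤ kx * (Λ * R ^ α) + kt * (Λ * R ^ α) := add_le_add W1 W2
    _ = (kt + kx : ℕ) * (Λ * R ^ α) := by push_cast; ring

lemma projT_spec (hR : 0 < R) {t : ℝ} (ht : t ∈ Icc (-1:ℝ) 0) :
    projT R t ∈ Icc (-1:ℝ) 0 ∧ t ≤ projT R t ∧ projT R t ≤ t + R^2 := by
  have hR2 : (0:ℝ) < R^2 := by positivity
  have h1 : t ≤ projT R t := by
    have h := Int.le_ceil (t / R^2)
    calc t = (t / R^2) * R^2 := by field_simp
      _ ≤ (⌈t / R^2⌉ : ℝ) * R^2 := mul_le_mul_of_nonneg_right h hR2.le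
  have h2 : projT R t ≤ t + R^2 := by
    have h := (Int.ceil_lt_add_one (t / R^2)).le
    calc projT R t ≤ (t / R^2 + 1) * R^2 := mul_le_mul_of_nonneg_right h hR2.le
      _ = t + R^2 := by field_simp
  have h3 : projT R t ≤ 0 := by
    have hc : ⌈t / R^2⌉ ≤ 0 := Int.ceil_le.mpr
      (by exact_mod_cast div_nonpos_of_nonpos_of_nonneg ht.2 hR2.le)
    have : ((⌈t / R^2⌉ : ℤ) : ℝ) ≤ 0 := by exact_mod_cast hc
    exact mul_nonpos_iff.mpr (Or.inr ⟨this, hR2.le⟩)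
  exact ⟨⟨le_trans ht.1 h1, h3⟩, h1, h2⟩

lemma projX_spec (N : ℕ) {x : ℝ} (hx : x ∈ Icc (-1:ℝ) 1) :
    projX ((2:ℝ)^(-(N:ℤ))) x ∈ Icc (-1:ℝ) 1 ∧
    x - (2:ℝ)^(-(N:ℤ)) ≤ projX ((2:ℝ)^(-(N:ℤ))) x ∧ projX ((2:ℝ)^(-(N:ℤ))) x ≤ x := by
  set R := (2:ℝ)^(-(N:ℤ)) with hRdef
  have hR : 0 < R := by positivity
  have key : (2:ℝ)^N * R = 1 := by
    rw [hRdef, show ((2:ℝ)^N) = (2:ℝ)^(N:ℤ) from (zpow_natCast 2 N).symm,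
      ← zpow_add₀ (two_ne_zero : (2:ℝ) ≠ 0)]
    simp
  have h1 : projX R x ≤ x := by
    have h := Int.floor_le (x / R)
    calc projX R x = (⌊x / R⌋ : ℝ) * R := rfl
      _ ≤ (x / R) * R := mul_le_mul_of_nonneg_right h hR.le
      _ = x := by field_simp
  have h2 : x - R ≤ projX R x := by
    have h := (Int.sub_one_lt_floor (x / R)).le
    calc x - R = (x / R - 1) * R := by field_simp
      _ ≤ (⌊x / R⌋ : ℝ) * R := mul_le_mul_of_nonneg_right h hR.le
  have h3 : -1 ≤ projX R x := by
    have hfl : (-(2^N) : ℤ) ≤ ⌊x / R⌋ := by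
      rw [Int.le_floor]
      push_cast
      rw [le_div_iff₀ hR]
      nlinarith [hx.1]
    have hfl' : (-(2^N : ℝ)) ≤ (⌊x / R⌋ : ℝ) := by exact_mod_cast hfl
    calc (-1:ℝ) = -(2^N : ℝ) * R := by rw [neg_mul, key]
      _ ≤ (⌊x / R⌋ : ℝ) * R := mul_le_mul_of_nonneg_right hfl' hR.le
  exact ⟨⟨h3, le_trans h1 hx.2⟩, h2, h1⟩

lemma proj_mem_grid (N : ℕ) {u : ℝ × ℝ} (hu : u ∈ Icc (-1:ℝ) 0 ×ˢ Icc (-1:ℝ) 1) :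
    proj ((2:ℝ)^(-(N:ℤ))) u ∈ grid ((2:ℝ)^(-(N:ℤ))) := by
  have hR : (0:ℝ) < (2:ℝ)^(-(N:ℤ)) := by positivity
  exact ⟨(projT_spec hR hu.1).1, (projX_spec N hu.2).1,
    ⟨⌈u.1 / ((2:ℝ)^(-(N:ℤ)))^2⌉, rfl⟩, ⟨⌊u.2 / ((2:ℝ)^(-(N:ℤ)))⌋, rfl⟩⟩

lemma grid_subset_rect {R : ℝ} {u : ℝ × ℝ} (hu : u ∈ grid R) :
    u ∈ Icc (-1:ℝ) 0 ×ˢ Icc (-1:ℝ) 1 := ⟨hu.1, hu.2.1⟩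

lemma grid_half (R : ℝ) : grid (2*R) ⊆ grid R := by
  rintro ⟨a1, a2⟩ ⟨h1, h2, ⟨m, hm⟩, ⟨n, hn⟩⟩
  exact ⟨h1, h2, ⟨4*m, by rw [hm]; push_cast; ring⟩, ⟨2*n, by rw [hn]; push_cast; ring⟩⟩

lemma R_succ (N : ℕ) : (2:ℝ)^(-(N:ℤ)) = 2 * (2:ℝ)^(-((N+1:ℕ):ℤ)) := by
  have h : (-(N:ℤ)) = 1 + (-((N+1:ℕ):ℤ)) := by push_cast; ring
  rw [h, zpow_add₀ (two_ne_zero : (2:ℝ) ≠ 0), zpow_one]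

/-- Telescoping step: consecutive-scale projections of the same point. -/
lemma tele_step (hΛ : 0 ≤ Λ) (N : ℕ) (hH : Hyp g Λ α ((2:ℝ)^(-((N+1:ℕ):ℤ))))
    {u : ℝ × ℝ} (hu : u ∈ Icc (-1:ℝ) 0 ×ˢ Icc (-1:ℝ) 1) :
    |g (proj ((2:ℝ)^(-(N:ℤ))) u) - g (proj ((2:ℝ)^(-((N+1:ℕ):ℤ))) u)| ≤
      8 * (Λ * ((2:ℝ)^(-((N+1:ℕ):ℤ))) ^ α) := by
  have hR'pos : (0:ℝ) < (2:ℝ)^(-((N+1:ℕ):ℤ)) := by positivity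
  have hRpos : (0:ℝ) < (2:ℝ)^(-(N:ℤ)) := by positivity
  have hRR' : (2:ℝ)^(-(N:ℤ)) = 2 * (2:ℝ)^(-((N+1:ℕ):ℤ)) := R_succ N
  set R := (2:ℝ)^(-(N:ℤ)) with hRdef
  set R' := (2:ℝ)^(-((N+1:ℕ):ℤ)) with hR'def
  have ha : proj R u ∈ grid R' := by
    have h := proj_mem_grid N hu
    rw [← hRdef] at h
    rw [hRR'] at h ⊢
    exact grid_half _ h
  have hb : proj R' u ∈ grid R' := by
    have h := proj_mem_grid (N+1) hu
    rw [← hR'def] at h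
    exact h
  obtain ⟨_, hta1, hta2⟩ := projT_spec hRpos hu.1
  obtain ⟨_, htb1, htb2⟩ := projT_spec hR'pos hu.1
  obtain ⟨_, hxa1, hxa2⟩ := projX_spec N hu.2
  obtain ⟨_, hxb1, hxb2⟩ := projX_spec (N+1) hu.2
  rw [← hRdef] at hxa1 hxa2
  rw [← hR'def] at hxb1 hxb2
  have hsq : R^2 = 4 * R'^2 := by rw [hRR']; ring
  have h1 : |(proj R u).1 - (proj R' u).1| ≤ (5:ℕ) * R'^2 := by
    show |projT R u.1 - projT R' u.1| ≤ (5:ℕ) * R'^2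
    rw [abs_le]
    push_cast
    constructor <;> linarith
  have h2 : |(proj R u).2 - (proj R' u).2| ≤ (3:ℕ) * R' := by
    show |projX R u.2 - projX R' u.2| ≤ (3:ℕ) * R'
    rw [abs_le]
    push_cast
    constructor <;> linarith
  have := walk hΛ hR'pos hH 5 3 ha hb h1 h2
  calc |g (proj R u) - g (proj R' u)| ≤ ((5 + 3 : ℕ) : ℝ) * (Λ * R' ^ α) := this
    _ = 8 * (Λ * R' ^ α) := by norm_num

end Stmt17Aux

open Stmt17Aux Filter Topology

set_option maxHeartbeats 2000000 in
/-- Deterministic chaining step of Kolmogorov's continuity theorem: a Hölder-type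
increment bound on the dyadic parabolic grids `Γ_{2^{−N}}` (for neighboring grid
points, `|t−s| ≤ 3R²`, `|x−y| ≤ R`) upgrades, for continuous `g`, to a Hölder
bound `|g(t,x) − g(s,y)| ≤ C(α) Λ (√|t−s| + |x−y|)^α` on all of `[−1,0]×[−1,1]`. -/
theorem stmt_17 : ∀ α : ℝ, α ∈ Ioo (0:ℝ) 1 → ∃ C : ℝ, 0 < C ∧
    ∀ (g : ℝ × ℝ → ℝ) (Λ : ℝ), 0 ≤ Λ →
      ContinuousOn g (Icc (-1:ℝ) 0 ×ˢ Icc (-1:ℝ) 1) →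
      (∀ N : ℕ, 1 ≤ N →
        ∀ p ∈ grid ((2:ℝ) ^ (-(N:ℤ))), ∀ q ∈ grid ((2:ℝ) ^ (-(N:ℤ))),
          |p.1 - q.1| ≤ 3 * ((2:ℝ) ^ (-(N:ℤ)))^2 →
          |p.2 - q.2| ≤ (2:ℝ) ^ (-(N:ℤ)) →
          |g p - g q| ≤ Λ * ((2:ℝ) ^ (-(N:ℤ))) ^ α) →
      ∀ p ∈ Icc (-1:ℝ) 0 ×ˢ Icc (-1:ℝ) 1, ∀ q ∈ Icc (-1:ℝ) 0 ×ˢ Icc (-1:ℝ) 1,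
        |g p - g q| ≤ C * Λ * (Real.sqrt |p.1 - q.1| + |p.2 - q.2|) ^ α := by
  intro α hα
  obtain ⟨hα0, hα1⟩ := hα
  set r : ℝ := (2:ℝ) ^ (-α) with hrdef
  have hr0 : (0:ℝ) < r := Real.rpow_pos_of_pos two_pos _
  have hr1 : r < 1 := Real.rpow_lt_one_of_one_lt_of_neg one_lt_two (by linarith)
  have h1r : (0:ℝ) < 1 - r := by linarith
  refine ⟨26 + 16/(1-r), by positivity, ?_⟩
  intro g Λ hΛ hg H p hp q hq
  have hH : ∀ N : ℕ, 1 ≤ N → Hyp g Λ α ((2:ℝ)^(-(N:ℤ))) := fun N hN => H N hN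
  -- the scale identity ρ_N = r^N
  have hrho : ∀ N : ℕ, ((2:ℝ)^(-(N:ℤ))) ^ α = r ^ N := by
    intro N
    rw [← Real.rpow_intCast 2 (-(N:ℤ)), ← Real.rpow_natCast r N, hrdef,
      ← Real.rpow_mul (by norm_num), ← Real.rpow_mul (by norm_num)]
    congr 1
    push_cast
    ring
  set d : ℝ := Real.sqrt |p.1 - q.1| + |p.2 - q.2| with hddef
  have hd0 : 0 ≤ d := add_nonneg (Real.sqrt_nonneg _) (abs_nonneg _)
  rcases eq_or_lt_of_le hd0 with hd | hd
  · -- degenerate case d = 0, hence p = q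
    have h1 : Real.sqrt |p.1 - q.1| = 0 :=
      le_antisymm (by nlinarith [abs_nonneg (p.2 - q.2), Real.sqrt_nonneg |p.1 - q.1|])
        (Real.sqrt_nonneg _)
    have h2 : |p.2 - q.2| = 0 := by
      nlinarith [Real.sqrt_nonneg |p.1 - q.1|, abs_nonneg (p.2 - q.2)]
    have hpq : p = q := by
      have e1 : p.1 = q.1 := by
        have := (Real.sqrt_eq_zero (abs_nonneg _)).mp h1
        have := abs_eq_zero.mp this
        linarith
      have e2 : p.2 = q.2 := by
        have := abs_eq_zero.mp h2
        linarith
      exact Prod.ext e1 e2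
    subst hpq
    simp only [sub_self, abs_zero]
    rw [← hd, Real.zero_rpow hα0.ne', mul_zero]
  -- main case d > 0
  have he0 : (0:ℝ) < min d (1/2) := lt_min hd (by norm_num)
  set e : ℝ := min d (1/2) with hedef
  have he2 : e ≤ 1/2 := min_le_right _ _
  have hconv : ∀ n : ℕ, (2:ℝ)^(-(n:ℤ)) = (1/2:ℝ)^n := by
    intro n
    rw [zpow_neg, zpow_natCast, one_div, inv_pow]
  have hex : ∃ n : ℕ, (2:ℝ)^(-(n:ℤ)) ≤ e := by
    obtain ⟨n, hn⟩ := exists_pow_lt_of_lt_one he0 (by norm_num : (1/2:ℝ) < 1)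
    exact ⟨n, by rw [hconv]; exact hn.le⟩
  obtain ⟨N₀, hR₀e, hmin'⟩ : ∃ n : ℕ, ((2:ℝ)^(-(n:ℤ)) ≤ e) ∧
      ∀ m : ℕ, m < n → ¬((2:ℝ)^(-(m:ℤ)) ≤ e) :=
    ⟨Nat.find hex, Nat.find_spec hex, fun m hm => Nat.find_min hex hm⟩
  set R₀ : ℝ := (2:ℝ)^(-(N₀:ℤ)) with hR₀def
  have hR₀pos : 0 < R₀ := by positivity
  have hN₀1 : 1 ≤ N₀ := by
    by_contra h
    push_neg at h
    have h0 : N₀ = 0 := by omega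
    rw [hR₀def, h0] at hR₀e
    norm_num at hR₀e
    linarith
  have hlow : e < 2 * R₀ := by
    have hmin := hmin' (N₀ - 1) (by omega)
    push_neg at hmin
    have heq : (2:ℝ)^(-((N₀-1:ℕ):ℤ)) = 2 * R₀ := by
      have hcast : (-((N₀-1:ℕ):ℤ)) = 1 + (-(N₀:ℤ)) := by omega
      rw [hcast, zpow_add₀ (two_ne_zero : (2:ℝ) ≠ 0), zpow_one, hR₀def]
    rw [heq] at hmin
    exact hmin
  -- bounds on the increments of p, q
  have hsq : Real.sqrt |p.1 - q.1| ^ 2 = |p.1 - q.1| := Real.sq_sqrt (abs_nonneg _)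
  have hts : |p.1 - q.1| ≤ 4 * e^2 := by
    rcases le_or_gt d (1/2) with hcase | hcase
    · have he : e = d := min_eq_left hcase
      nlinarith [Real.sqrt_nonneg |p.1 - q.1|, abs_nonneg (p.2 - q.2)]
    · have he : e = 1/2 := min_eq_right hcase.le
      have h1 : |p.1 - q.1| ≤ 1 := by
        rw [abs_le]
        constructor <;> [linarith [hp.1.1, hq.1.2]; linarith [hp.1.2, hq.1.1]]
      rw [he]; norm_num; linarith
  have hxy : |p.2 - q.2| ≤ 4 * e := by
    rcases le_or_gt d (1/2) with hcase | hcase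
    · have he : e = d := min_eq_left hcase
      have : |p.2 - q.2| ≤ d := by
        rw [hddef]
        nlinarith [Real.sqrt_nonneg |p.1 - q.1|]
      linarith [he0]
    · have he : e = 1/2 := min_eq_right hcase.le
      have h1 : |p.2 - q.2| ≤ 2 := by
        rw [abs_le]
        constructor <;> [linarith [hp.2.1, hq.2.2]; linarith [hp.2.2, hq.2.1]]
      rw [he]; norm_num; linarith
  -- connection at scale N₀
  have hgp := proj_mem_grid N₀ hp
  have hgq := proj_mem_grid N₀ hq
  obtain ⟨_, htp1, htp2⟩ := projT_spec hR₀pos hp.1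
  obtain ⟨_, htq1, htq2⟩ := projT_spec hR₀pos hq.1
  obtain ⟨_, hxp1, hxp2⟩ := projX_spec N₀ hp.2
  obtain ⟨_, hxq1, hxq2⟩ := projX_spec N₀ hq.2
  rw [← hR₀def] at hxp1 hxp2 hxq1 hxq2 hgp hgq
  obtain ⟨ht', ht''⟩ := abs_le.mp hts
  obtain ⟨hx', hx''⟩ := abs_le.mp hxy
  have he4 : 4 * e^2 ≤ 16 * R₀^2 := by
    nlinarith [mul_pos (by linarith : (0:ℝ) < 2*R₀ - e) (by linarith : (0:ℝ) < 2*R₀ + e)]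
  have he8 : 4 * e ≤ 8 * R₀ := by linarith
  have hconn : |g (proj R₀ p) - g (proj R₀ q)| ≤ 26 * (Λ * R₀ ^ α) := by
    have h1 : |(proj R₀ p).1 - (proj R₀ q).1| ≤ (17:ℕ) * R₀^2 := by
      show |projT R₀ p.1 - projT R₀ q.1| ≤ (17:ℕ) * R₀^2
      rw [abs_le]
      push_cast
      constructor <;> linarith
    have h2 : |(proj R₀ p).2 - (proj R₀ q).2| ≤ (9:ℕ) * R₀ := by
      show |projX R₀ p.2 - projX R₀ q.2| ≤ (9:ℕ) * R₀
      rw [abs_le]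
      push_cast
      constructor <;> linarith
    have := walk hΛ hR₀pos (hH N₀ hN₀1) 17 9 hgp hgq h1 h2
    calc |g (proj R₀ p) - g (proj R₀ q)| ≤ ((17 + 9 : ℕ) : ℝ) * (Λ * R₀ ^ α) := this
      _ = 26 * (Λ * R₀ ^ α) := by norm_num
  -- telescoping tail
  have hRα : 0 ≤ R₀ ^ α := (Real.rpow_pos_of_pos hR₀pos α).le
  have tail : ∀ u ∈ Icc (-1:ℝ) 0 ×ˢ Icc (-1:ℝ) 1,
      |g (proj R₀ u) - g u| ≤ (8 * Λ * r^(N₀+1)) / (1 - r) := by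
    intro u hu
    set f : ℕ → ℝ := fun n => g (proj ((2:ℝ)^(-((N₀+n:ℕ):ℤ))) u) with hfdef
    have hstep : ∀ n : ℕ, dist (f n) (f (n+1)) ≤ (8 * Λ * r^(N₀+1)) * r^n := by
      intro n
      rw [Real.dist_eq, hfdef]
      have := tele_step hΛ (N₀+n) (hH (N₀+n+1) (by omega)) hu
      have heq : ((2:ℝ)^(-(((N₀+n:ℕ)+1:ℕ):ℤ))) ^ α = r^(N₀+1) * r^n := by
        rw [hrho]
        rw [← pow_add]
        congr 1
        omega
      rw [heq] at this
      calc |g (proj ((2:ℝ)^(-((N₀+n:ℕ):ℤ))) u) - g (proj ((2:ℝ)^(-((N₀+(n+1):ℕ):ℤ))) u)|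
          = |g (proj ((2:ℝ)^(-((N₀+n:ℕ):ℤ))) u) - g (proj ((2:ℝ)^(-(((N₀+n:ℕ)+1:ℕ):ℤ))) u)| := by
            norm_num [show N₀+(n+1) = (N₀+n)+1 by omega]
        _ ≤ 8 * (Λ * (r^(N₀+1) * r^n)) := this
        _ = (8 * Λ * r^(N₀+1)) * r^n := by ring
    have hRlim : Tendsto (fun n : ℕ => (2:ℝ)^(-((N₀+n:ℕ):ℤ))) atTop (𝓝 0) := by
      have heq : ∀ n : ℕ, (2:ℝ)^(-((N₀+n:ℕ):ℤ)) = (1/2:ℝ)^N₀ * (1/2:ℝ)^n := by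
        intro n
        rw [hconv, pow_add]
      simp only [heq]
      have := (tendsto_pow_atTop_nhds_zero_of_lt_one (by norm_num : (0:ℝ) ≤ 1/2)
        (by norm_num : (1/2:ℝ) < 1)).const_mul ((1/2:ℝ)^N₀)
      simpa using this
    have hT1 : Tendsto (fun n : ℕ => projT ((2:ℝ)^(-((N₀+n:ℕ):ℤ))) u.1) atTop (𝓝 u.1) := by
      have hub : Tendsto (fun n : ℕ => u.1 + ((2:ℝ)^(-((N₀+n:ℕ):ℤ)))^2) atTop (𝓝 u.1) := by
        have h2 : Tendsto (fun n : ℕ => ((2:ℝ)^(-((N₀+n:ℕ):ℤ)))^2) atTop (𝓝 0) := by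
          have := hRlim.pow 2
          simpa using this
        simpa using tendsto_const_nhds.add h2
      refine tendsto_of_tendsto_of_tendsto_of_le_of_le tendsto_const_nhds hub ?_ ?_
      · intro n
        exact (projT_spec (by positivity) hu.1).2.1
      · intro n
        exact (projT_spec (by positivity) hu.1).2.2
    have hX1 : Tendsto (fun n : ℕ => projX ((2:ℝ)^(-((N₀+n:ℕ):ℤ))) u.2) atTop (𝓝 u.2) := by
      have hlb : Tendsto (fun n : ℕ => u.2 - (2:ℝ)^(-((N₀+n:ℕ):ℤ))) atTop (𝓝 u.2) := by
        simpa using tendsto_const_nhds.sub hRlim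
      refine tendsto_of_tendsto_of_tendsto_of_le_of_le hlb tendsto_const_nhds ?_ ?_
      · intro n
        exact (projX_spec (N₀+n) hu.2).2.1
      · intro n
        exact (projX_spec (N₀+n) hu.2).2.2
    have hproj : Tendsto (fun n : ℕ => proj ((2:ℝ)^(-((N₀+n:ℕ):ℤ))) u) atTop (𝓝 u) := by
      rw [show u = (u.1, u.2) from rfl]
      exact hT1.prodMk_nhds hX1
    have hwithin : Tendsto (fun n : ℕ => proj ((2:ℝ)^(-((N₀+n:ℕ):ℤ))) u) atTop
        (𝓝[Icc (-1:ℝ) 0 ×ˢ Icc (-1:ℝ) 1] u) :=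
      tendsto_nhdsWithin_of_tendsto_nhds_of_eventually_within _ hproj
        (Eventually.of_forall fun n => grid_subset_rect (proj_mem_grid (N₀+n) hu))
    have htends : Tendsto f atTop (𝓝 (g u)) := (hg u hu).tendsto.comp hwithin
    have := dist_le_of_le_geometric_of_tendsto₀ r (8 * Λ * r^(N₀+1)) hr1 hstep htends
    rw [Real.dist_eq] at this
    have hf0 : f 0 = g (proj R₀ u) := by
      show g (proj ((2:ℝ)^(-((N₀+0:ℕ):ℤ))) u) = g (proj R₀ u)
      norm_num [hR₀def]
    rw [hf0] at this
    exact this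
  have h1 := tail p hp
  have h2 := tail q hq
  -- final assembly
  have hRd : R₀ ^ α ≤ d ^ α :=
    Real.rpow_le_rpow hR₀pos.le (hR₀e.trans (min_le_left _ _)) hα0.le
  have hrN : r ^ N₀ = R₀ ^ α := (hrho N₀).symm
  have hrN1 : r ^ (N₀+1) ≤ d ^ α := by
    calc r ^ (N₀+1) ≤ r ^ N₀ := pow_le_pow_of_le_one hr0.le hr1.le (by omega)
      _ = R₀ ^ α := hrN
      _ ≤ d ^ α := hRd
  have hdα : 0 ≤ d ^ α := Real.rpow_nonneg hd0 α
  have htail_p : |g p - g (proj R₀ p)| ≤ (8 * Λ * d ^ α) / (1 - r) := by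
    rw [abs_sub_comm]
    calc |g (proj R₀ p) - g p| ≤ (8 * Λ * r^(N₀+1)) / (1 - r) := h1
      _ ≤ (8 * Λ * d ^ α) / (1 - r) :=
        (div_le_div_iff_of_pos_right h1r).mpr (mul_le_mul_of_nonneg_left hrN1 (by positivity))
  have htail_q : |g (proj R₀ q) - g q| ≤ (8 * Λ * d ^ α) / (1 - r) := by
    calc |g (proj R₀ q) - g q| ≤ (8 * Λ * r^(N₀+1)) / (1 - r) := h2
      _ ≤ (8 * Λ * d ^ α) / (1 - r) :=
        (div_le_div_iff_of_pos_right h1r).mpr (mul_le_mul_of_nonneg_left hrN1 (by positivity))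
  have hconn' : |g (proj R₀ p) - g (proj R₀ q)| ≤ 26 * (Λ * d ^ α) := by
    calc |g (proj R₀ p) - g (proj R₀ q)| ≤ 26 * (Λ * R₀ ^ α) := hconn
      _ ≤ 26 * (Λ * d ^ α) :=
        mul_le_mul_of_nonneg_left (mul_le_mul_of_nonneg_left hRd hΛ) (by norm_num)
  have tri : |g p - g q| ≤ |g p - g (proj R₀ p)| + |g (proj R₀ p) - g (proj R₀ q)| +
      |g (proj R₀ q) - g q| := by
    have t1 := abs_sub_le (g p) (g (proj R₀ p)) (g (proj R₀ q))
    have t2 := abs_sub_le (g p) (g (proj R₀ q)) (g q)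
    linarith
  calc |g p - g q| ≤ |g p - g (proj R₀ p)| + |g (proj R₀ p) - g (proj R₀ q)| +
        |g (proj R₀ q) - g q| := tri
    _ ≤ (8 * Λ * d ^ α) / (1 - r) + 26 * (Λ * d ^ α) + (8 * Λ * d ^ α) / (1 - r) :=
        add_le_add (add_le_add htail_p hconn') htail_q
    _ = (26 + 16/(1-r)) * Λ * d ^ α := by field_simp; ring
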